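/- Let Φ₁ and Φ₂ be quantum channels from d×d complex matrices to m×m complex matrices, let Δ = Φ₁ − Φ₂, and suppose there is a unit vector φ ∈ ℂ^d such that M(Δ) = ‖J(Δ)‖₁ · φφᴴ. Then there exists a Hermitian m×m complex matrix C with ‖C‖₁ = ‖J(Δ)‖₁ such that J(Δ) = C ⊗ φφᴴ; in particular the support of J(Δ) is contained in ℂ^m ⊗ span{φ}. -/

import Mathlib

open Matrix Kronecker ComplexOrder

noncomputable section

/-- The PSD square root of a PSD matrix (as `Matrix.PosSemidef.sqrt` was defined in
the older Mathlib, where it has since been removed). -/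
noncomputable def Matrix.PosSemidef.sqrt {n : Type*} [Fintype n] [DecidableEq n]
    {A : Matrix n n ℂ} (hA : A.PosSemidef) : Matrix n n ℂ :=
  hA.1.eigenvectorUnitary.1 * diagonal ((↑) ∘ (√·) ∘ hA.1.eigenvalues) *
    (star hA.1.eigenvectorUnitary : Matrix n n ℂ)

/-- The matrix absolute value `|A| = √(AᴴA)`. -/
noncomputable def matAbs {n : Type*} [Fintype n] [DecidableEq n] (A : Matrix n n ℂ) :
    Matrix n n ℂ :=
  (Matrix.posSemidef_conjTranspose_mul_self A).sqrt

/-- The trace norm `‖A‖₁ = Tr √(AᴴA)`. -/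
noncomputable def traceNorm {n : Type*} [Fintype n] [DecidableEq n] (A : Matrix n n ℂ) : ℝ :=
  ((matAbs A).trace).re

/-- The positive semidefinite square root of a PSD matrix (zero otherwise). -/
noncomputable def matSqrt {n : Type*} [Fintype n] [DecidableEq n] (σ : Matrix n n ℂ) :
    Matrix n n ℂ :=
  open scoped Classical in
  if h : σ.PosSemidef then h.sqrt else 0

/-- A density matrix: positive semidefinite with unit trace. -/
def IsDensity {n : Type*} [Fintype n] [DecidableEq n] (σ : Matrix n n ℂ) : Prop :=
  σ.PosSemidef ∧ σ.trace = 1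

/-- The Choi operator of a linear map between matrix algebras. -/
noncomputable def choi {d m : ℕ}
    (S : Matrix (Fin d) (Fin d) ℂ →ₗ[ℂ] Matrix (Fin m) (Fin m) ℂ) :
    Matrix (Fin m × Fin d) (Fin m × Fin d) ℂ :=
  ∑ i : Fin d, ∑ j : Fin d,
    (S (Matrix.single i j 1)) ⊗ₖ (Matrix.single i j 1)

/-- The ME-norm `‖S‖_ME = ‖J(S)‖₁ / d`. -/
noncomputable def MENorm {d m : ℕ}
    (S : Matrix (Fin d) (Fin d) ℂ →ₗ[ℂ] Matrix (Fin m) (Fin m) ℂ) : ℝ :=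
  traceNorm (choi S) / d

/-- The diamond norm: supremum over density matrices σ of
`‖(1 ⊗ √σ) J(S) (1 ⊗ √σ)‖₁`. -/
noncomputable def diamondNorm {d m : ℕ}
    (S : Matrix (Fin d) (Fin d) ℂ →ₗ[ℂ] Matrix (Fin m) (Fin m) ℂ) : ℝ :=
  ⨆ σ : {σ : Matrix (Fin d) (Fin d) ℂ // IsDensity σ},
    traceNorm (((1 : Matrix (Fin m) (Fin m) ℂ) ⊗ₖ matSqrt σ.1) * choi S *
      ((1 : Matrix (Fin m) (Fin m) ℂ) ⊗ₖ matSqrt σ.1))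

/-- The M-operator `M(S) = Tr_B |J(S)|`. -/
noncomputable def Mop {d m : ℕ}
    (S : Matrix (Fin d) (Fin d) ℂ →ₗ[ℂ] Matrix (Fin m) (Fin m) ℂ) :
    Matrix (Fin d) (Fin d) ℂ :=
  Matrix.of fun k l => ∑ b : Fin m, matAbs (choi S) (b, k) (b, l)

/-- A quantum channel: completely positive (PSD Choi operator, by Choi's theorem)
and trace preserving. -/
def IsQChannel {d m : ℕ}
    (S : Matrix (Fin d) (Fin d) ℂ →ₗ[ℂ] Matrix (Fin m) (Fin m) ℂ) : Prop :=
  (choi S).PosSemidef ∧ ∀ ρ : Matrix (Fin d) (Fin d) ℂ, (S ρ).trace = ρ.trace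


/-!
Write `J = J(Δ)`, `P = φφᴴ` and `Q = 1 ⊗ P`. Since `Tr (|J| Q) = Tr (M(Δ) P) = ‖J‖₁ = Tr |J|`,
the positive matrix `|J|` has zero trace against the projection `1 - Q`, so `|J| (1 - Q) = 0`.
Then `(J (1 - Q))ᴴ (J (1 - Q)) = (1 - Q) |J|² (1 - Q) = 0`, i.e. `J Q = J`, and as `J` is
Hermitian (a difference of positive Choi operators) also `Q J = J`. Hence
`J = Q J Q = C ⊗ P` with `C = (1 ⊗ φᴴ) J (1 ⊗ φ)`, and `|C ⊗ P| = |C| ⊗ P` gives `‖C‖₁ = ‖J‖₁`.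
-/

open scoped MatrixOrder

section CFCAbs

variable {𝕜 n p : Type*} [RCLike 𝕜] [Fintype n] [DecidableEq n] [Fintype p] [DecidableEq p]

lemma cfcAbs_kronecker (A : Matrix n n 𝕜) (B : Matrix p p 𝕜) :
    CFC.abs (A ⊗ₖ B) = CFC.abs A ⊗ₖ CFC.abs B :=
  CFC.sqrt_unique
    (by simp only [← mul_kronecker_mul, CFC.abs_mul_abs, star_eq_conjTranspose,
      conjTranspose_kronecker])
    ((CFC.abs_nonneg A).posSemidef.kronecker (CFC.abs_nonneg B).posSemidef).nonneg

lemma Matrix.PosSemidef.mul_eq_zero_of_trace_mul_eq_zero {A R : Matrix n n 𝕜}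
    (hA : A.PosSemidef) (hR : Rᴴ = R) (hRR : R * R = R) (h : (A * R).trace = 0) :
    A * R = 0 := by
  obtain ⟨B, rfl⟩ := CStarAlgebra.nonneg_iff_eq_star_mul_self.mp hA.nonneg
  rw [star_eq_conjTranspose] at h ⊢
  have hBR : (B * R)ᴴ * (B * R) = 0 := by
    refine (posSemidef_conjTranspose_mul_self (B * R)).trace_eq_zero_iff.mp ?_
    rw [conjTranspose_mul, hR, Matrix.mul_assoc, trace_mul_comm, Matrix.mul_assoc,
      Matrix.mul_assoc B, hRR, ← Matrix.mul_assoc, h]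
  rw [Matrix.mul_assoc, conjTranspose_mul_self_eq_zero.mp hBR, Matrix.mul_zero]

lemma mul_eq_self_of_trace_cfcAbs_mul {J Q : Matrix n n 𝕜} (hQ : Qᴴ = Q) (hQQ : Q * Q = Q)
    (h : (CFC.abs J * Q).trace = (CFC.abs J).trace) : J * Q = J := by
  set R := 1 - Q
  have hR : Rᴴ = R := by rw [conjTranspose_sub, conjTranspose_one, hQ]
  have hRR : R * R = R := by simp [R, Matrix.mul_sub, Matrix.sub_mul, hQQ]
  have habsR : CFC.abs J * R = 0 :=
    (CFC.abs_nonneg J).posSemidef.mul_eq_zero_of_trace_mul_eq_zero hR hRR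
      (by rw [Matrix.mul_sub, Matrix.mul_one, trace_sub, h, sub_self])
  have hJR : (J * R)ᴴ * (J * R) = 0 := by
    rw [conjTranspose_mul, hR, Matrix.mul_assoc, ← Matrix.mul_assoc Jᴴ, ← star_eq_conjTranspose,
      ← CFC.abs_mul_abs, Matrix.mul_assoc, habsR, Matrix.mul_zero, Matrix.mul_zero]
  have := conjTranspose_mul_self_eq_zero.mp hJR
  rwa [Matrix.mul_sub, Matrix.mul_one, sub_eq_zero, eq_comm] at this

lemma Matrix.IsHermitian.conj_eq_self_of_trace_cfcAbs_mul {J Q : Matrix n n 𝕜}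
    (hJ : J.IsHermitian) (hQ : Qᴴ = Q) (hQQ : Q * Q = Q)
    (h : (CFC.abs J * Q).trace = (CFC.abs J).trace) : Q * J * Q = J := by
  have hJQ := mul_eq_self_of_trace_cfcAbs_mul hQ hQQ h
  have hQJ : Q * J = J := by
    simpa only [conjTranspose_mul, hQ, hJ.eq] using congrArg (·ᴴ) hJQ
  rw [hQJ, hJQ]

end CFCAbs

section TraceNorm

variable {n p : Type*} [Fintype n] [DecidableEq n] [Fintype p] [DecidableEq p]

lemma Matrix.PosSemidef.sqrt_eq_cfcSqrt {A : Matrix n n ℂ} (hA : A.PosSemidef) :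
    hA.sqrt = CFC.sqrt A := by
  rw [CFC.sqrt_eq_real_sqrt A hA.nonneg, cfcₙ_eq_cfc, hA.1.cfc_eq, IsHermitian.cfc,
    Unitary.conjStarAlgAut_apply]
  rfl

lemma matAbs_eq_cfcAbs (A : Matrix n n ℂ) : matAbs A = CFC.abs A := by
  rw [matAbs, Matrix.PosSemidef.sqrt_eq_cfcSqrt, CFC.abs, star_eq_conjTranspose]

lemma ofReal_traceNorm (A : Matrix n n ℂ) : (traceNorm A : ℂ) = (CFC.abs A).trace := by
  rw [traceNorm, matAbs_eq_cfcAbs]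
  exact (Complex.eq_re_of_ofReal_le (CFC.abs_nonneg A).posSemidef.trace_nonneg).symm

lemma ofReal_traceNorm_of_posSemidef {A : Matrix n n ℂ} (hA : A.PosSemidef) :
    (traceNorm A : ℂ) = A.trace := by
  rw [ofReal_traceNorm, CFC.abs_of_nonneg A hA.nonneg]

lemma traceNorm_kronecker (A : Matrix n n ℂ) (B : Matrix p p ℂ) :
    traceNorm (A ⊗ₖ B) = traceNorm A * traceNorm B := by
  apply Complex.ofReal_injective
  rw [Complex.ofReal_mul, ofReal_traceNorm, ofReal_traceNorm, ofReal_traceNorm,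
    cfcAbs_kronecker, trace_kronecker]

end TraceNorm

section PartialTrace

variable {α m n : Type*} [Fintype m] [Fintype n]

lemma mul_one_kronecker_apply [Semiring α] [DecidableEq m] (X : Matrix (m × n) (m × n) α)
    (P : Matrix n n α) (a b : m) (k l : n) :
    (X * ((1 : Matrix m m α) ⊗ₖ P)) (a, k) (b, l) = ∑ l', X (a, k) (b, l') * P l' l := by
  simp [mul_apply, Fintype.sum_prod_type, one_apply]

lemma one_kronecker_mul_apply [Semiring α] [DecidableEq m] (X : Matrix (m × n) (m × n) α)
    (P : Matrix n n α) (a b : m) (k l : n) :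
    (((1 : Matrix m m α) ⊗ₖ P) * X) (a, k) (b, l) = ∑ k', P k k' * X (a, k') (b, l) := by
  simp [mul_apply, Fintype.sum_prod_type, one_apply]

def partialTraceLeft [AddCommMonoid α] (X : Matrix (m × n) (m × n) α) : Matrix n n α :=
  of fun k l => ∑ b, X (b, k) (b, l)

lemma trace_mul_one_kronecker [Semiring α] [DecidableEq m] (X : Matrix (m × n) (m × n) α)
    (P : Matrix n n α) :
    (X * ((1 : Matrix m m α) ⊗ₖ P)).trace = (partialTraceLeft X * P).trace := by
  simp only [trace, diag_apply, Fintype.sum_prod_type, mul_one_kronecker_apply]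
  simp only [mul_apply, partialTraceLeft, of_apply, Finset.sum_mul]
  rw [Finset.sum_comm]
  exact Finset.sum_congr rfl fun _ _ => Finset.sum_comm

lemma Mop_eq_partialTraceLeft {d m : ℕ}
    (S : Matrix (Fin d) (Fin d) ℂ →ₗ[ℂ] Matrix (Fin m) (Fin m) ℂ) :
    Mop S = partialTraceLeft (CFC.abs (choi S)) := by
  rw [← matAbs_eq_cfcAbs]
  rfl

end PartialTrace

section PartialInner

variable {α m n : Type*} [Fintype n] [CommSemiring α] [StarRing α]

def partialInner (φ : n → α) (X : Matrix (m × n) (m × n) α) : Matrix m m α :=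
  of fun a b => ∑ k, ∑ l, star (φ k) * X (a, k) (b, l) * φ l

lemma one_kronecker_vecMulVec_mul_mul [DecidableEq m] [Fintype m] (φ : n → α)
    (X : Matrix (m × n) (m × n) α) :
    ((1 : Matrix m m α) ⊗ₖ vecMulVec φ (star φ)) * X * (1 ⊗ₖ vecMulVec φ (star φ)) =
      partialInner φ X ⊗ₖ vecMulVec φ (star φ) := by
  ext ⟨a, k⟩ ⟨b, l⟩
  simp only [mul_one_kronecker_apply, one_kronecker_mul_apply, kroneckerMap_apply,
    partialInner, vecMulVec_apply, of_apply, Pi.star_apply, Finset.sum_mul]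
  rw [Finset.sum_comm]
  exact Finset.sum_congr rfl fun _ _ => Finset.sum_congr rfl fun _ _ => by ring

lemma Matrix.IsHermitian.partialInner {X : Matrix (m × n) (m × n) α} (hX : X.IsHermitian)
    (φ : n → α) : (_root_.partialInner φ X).IsHermitian := by
  ext a b
  simp only [_root_.partialInner, conjTranspose_apply, of_apply, star_sum, star_mul', star_star,
    ← hX.apply (a, _) (b, _)]
  rw [Finset.sum_comm]
  exact Finset.sum_congr rfl fun _ _ => Finset.sum_congr rfl fun _ _ => by ring

end PartialInner

lemma vecMulVec_star_mul_self {α n : Type*} [Fintype n] [Semiring α] [Star α] {φ : n → α}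
    (hφ : star φ ⬝ᵥ φ = 1) :
    vecMulVec φ (star φ) * vecMulVec φ (star φ) = vecMulVec φ (star φ) := by
  rw [vecMulVec_mul_vecMulVec, hφ, one_smul]

lemma choi_sub {d m : ℕ} (S T : Matrix (Fin d) (Fin d) ℂ →ₗ[ℂ] Matrix (Fin m) (Fin m) ℂ) :
    choi (S - T) = choi S - choi T := by
  simp only [choi, LinearMap.sub_apply, ← Finset.sum_sub_distrib]
  congr! 2
  ext
  simp [sub_mul]

theorem stmt3_general {d m : ℕ}
    (Phi1 Phi2 : Matrix (Fin d) (Fin d) ℂ →ₗ[ℂ] Matrix (Fin m) (Fin m) ℂ)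
    (h1 : IsQChannel Phi1) (h2 : IsQChannel Phi2)
    (Delta : Matrix (Fin d) (Fin d) ℂ →ₗ[ℂ] Matrix (Fin m) (Fin m) ℂ)
    (hDelta : Delta = Phi1 - Phi2)
    (phi : Fin d → ℂ) (hphi : star phi ⬝ᵥ phi = 1)
    (hM : Mop Delta = (traceNorm (choi Delta) : ℂ) • Matrix.vecMulVec phi (star phi)) :
    ∃ C : Matrix (Fin m) (Fin m) ℂ, C.IsHermitian ∧
      traceNorm C = traceNorm (choi Delta) ∧
      choi Delta = C ⊗ₖ Matrix.vecMulVec phi (star phi) := by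
  have hJ : (choi Delta).IsHermitian := by rw [hDelta, choi_sub]; exact h1.1.1.sub h2.1.1
  set J := choi Delta
  set P := vecMulVec phi (star phi)
  have hP : P.PosSemidef := posSemidef_vecMulVec_self_star phi
  have hPP : P * P = P := vecMulVec_star_mul_self hphi
  have hPtr : P.trace = 1 := by rw [trace_vecMulVec, dotProduct_comm, hphi]
  have hQ : ((1 : Matrix (Fin m) (Fin m) ℂ) ⊗ₖ P)ᴴ = 1 ⊗ₖ P := by
    rw [conjTranspose_kronecker, conjTranspose_one, hP.1.eq]
  have hQQ : ((1 : Matrix (Fin m) (Fin m) ℂ) ⊗ₖ P) * (1 ⊗ₖ P) = 1 ⊗ₖ P := by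
    rw [← mul_kronecker_mul, Matrix.one_mul, hPP]
  have htr : (CFC.abs J * (1 ⊗ₖ P)).trace = (CFC.abs J).trace := by
    rw [trace_mul_one_kronecker, ← Mop_eq_partialTraceLeft, hM, smul_mul_assoc, hPP,
      trace_smul, hPtr, smul_eq_mul, mul_one, ofReal_traceNorm]
  have hJC : J = partialInner phi J ⊗ₖ P :=
    (hJ.conj_eq_self_of_trace_cfcAbs_mul hQ hQQ htr).symm.trans
      (one_kronecker_vecMulVec_mul_mul phi J)
  have hPnorm : traceNorm P = 1 := mod_cast (ofReal_traceNorm_of_posSemidef hP).trans hPtr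
  refine ⟨partialInner phi J, hJ.partialInner phi, ?_, hJC⟩
  calc traceNorm (partialInner phi J)
      = traceNorm (partialInner phi J ⊗ₖ P) := by rw [traceNorm_kronecker, hPnorm, mul_one]
    _ = traceNorm J := by rw [← hJC]

/-- if `M(Δ) = ‖J(Δ)‖₁ · φφᴴ` for a unit vector `φ`, where
`Δ = Φ₁ − Φ₂` is a difference of channels, then `J(Δ) = C ⊗ φφᴴ` for some
Hermitian `C` with `‖C‖₁ = ‖J(Δ)‖₁`; in particular the support of `J(Δ)` is
contained in `ℂ^m ⊗ span{φ}`. -/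
theorem stmt3 {d m : ℕ} (hd : 1 ≤ d)
    (Phi1 Phi2 : Matrix (Fin d) (Fin d) ℂ →ₗ[ℂ] Matrix (Fin m) (Fin m) ℂ)
    (h1 : IsQChannel Phi1) (h2 : IsQChannel Phi2)
    (Delta : Matrix (Fin d) (Fin d) ℂ →ₗ[ℂ] Matrix (Fin m) (Fin m) ℂ)
    (hDelta : Delta = Phi1 - Phi2)
    (phi : Fin d → ℂ) (hphi : star phi ⬝ᵥ phi = 1)
    (hM : Mop Delta = (traceNorm (choi Delta) : ℂ) • Matrix.vecMulVec phi (star phi)) :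
    ∃ C : Matrix (Fin m) (Fin m) ℂ, C.IsHermitian ∧
      traceNorm C = traceNorm (choi Delta) ∧
      choi Delta = C ⊗ₖ Matrix.vecMulVec phi (star phi) :=
  stmt3_general Phi1 Phi2 h1 h2 Delta hDelta phi hphi hM
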